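/- arXiv:1903.04644 — 2 statements merged into one kernel-verified Lean document; each statement's English description precedes it below -/
import Mathlib

section
/- Let f : [0,∞) → ℝ be continuous, nonnegative on its domain of definition, of the form f(t) = r sin(4γt + θ) + γ^{−2}E₀ with γ > 0, r ≥ 0, θ ∈ ℝ. If f(0) ≥ 2γ^{−2}E₀ and f(0) > 0, then r ≥ γ^{−2}E₀ and there exists τ < ∞ with f(τ) = 0. -/
/-- If `f(t) = r sin(4γt + θ) + γ⁻²E₀` is nonnegative-variance-type data with
`r² = (f(0) - γ⁻²E₀)² + (γ⁻²/16) f'(0)²`, `f(0) ≥ 2γ⁻²E₀` and `f(0) > 0`, then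
`r ≥ γ⁻²E₀` and `f` vanishes at some finite time `τ ≥ 0`. -/
theorem stmt2 (γ E₀ r θ d0 : ℝ) (hγ : 0 < γ) (hr : 0 ≤ r)
    (f : ℝ → ℝ) (hcont : Continuous f)
    (hform : ∀ t : ℝ, 0 ≤ t → f t = r * Real.sin (4 * γ * t + θ) + γ⁻¹ ^ 2 * E₀)
    (hr2 : r ^ 2 = (f 0 - γ⁻¹ ^ 2 * E₀) ^ 2 + γ⁻¹ ^ 2 / 16 * d0 ^ 2)
    (h0 : 2 * γ⁻¹ ^ 2 * E₀ ≤ f 0) (hpos : 0 < f 0) :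
    γ⁻¹ ^ 2 * E₀ ≤ r ∧ ∃ τ : ℝ, 0 ≤ τ ∧ f τ = 0 := by
  set c := γ⁻¹ ^ 2 * E₀ with hc
  have hf0 : f 0 = r * Real.sin θ + c := by
    have := hform 0 le_rfl
    simpa using this
  have hsinθ : c ≤ r * Real.sin θ := by
    rw [hf0] at h0; linarith
  have hcr : c ≤ r := by
    rcases le_or_gt c 0 with h | h
    · linarith
    · have : r * Real.sin θ ≤ r * 1 := by
        apply mul_le_mul_of_nonneg_left (Real.sin_le_one θ) hr
      linarith
  refine ⟨hcr, ?_⟩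
  -- pick t with sin (4γt+θ) = -1
  set n : ℕ := ⌈(θ + Real.pi / 2) / (2 * Real.pi)⌉₊ with hn
  set t : ℝ := (2 * Real.pi * n - Real.pi / 2 - θ) / (4 * γ) with ht
  have hpi := Real.pi_pos
  have ht0 : 0 ≤ t := by
    apply div_nonneg _ (by linarith)
    have : (θ + Real.pi / 2) / (2 * Real.pi) ≤ (n : ℝ) := Nat.le_ceil _
    have := (div_le_iff₀ (by linarith : (0:ℝ) < 2 * Real.pi)).mp this
    linarith
  have harg : 4 * γ * t + θ = (n : ℝ) * (2 * Real.pi) - Real.pi / 2 := by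
    rw [ht]
    field_simp
    ring
  have hsin : Real.sin (4 * γ * t + θ) = -1 := by
    rw [harg, Real.sin_sub_pi_div_two, Real.cos_nat_mul_two_pi]
  have hft : f t ≤ 0 := by
    rw [hform t ht0, hsin]; linarith
  have hIcc : Set.Icc (f t) (f 0) ⊆ f '' Set.Icc 0 t :=
    intermediate_value_Icc' ht0 hcont.continuousOn
  obtain ⟨τ, hτmem, hτ⟩ := hIcc ⟨hft, le_of_lt hpos⟩
  exact ⟨τ, hτmem.1, hτ⟩
end

section
/- Let N ≥ 3, 0 < b < 1, 1 < p < 1 + (4−2b)/(N−2), ω ∈ ℝ, and consider the polynomial G(r) = Ar² + Br + C with A = −(p+3)²(2b + N(p−1) + 4), B = ω(p+3)²(2N − (2+b)), C = (b − 2N + 2)(p(N−2) + b + N − 4)(p(N−2) + 2b − N − 2). Then A < 0 and C ≥ 0, and consequently there exists k ∈ [0,∞) such that G(r) > 0 on (0,k) and G(r) < 0 on (k,∞). -/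
/-- For `N ≥ 3`, `0 < b < 1`, `1 < p < 1 + (4-2b)/(N-2)` and the quadratic
`G(r) = Ar² + Br + C` with
`A = -(p+3)²(2b + N(p-1) + 4)`, `B = ω(p+3)²(2N - (2+b))`,
`C = (b - 2N + 2)(p(N-2) + b + N - 4)(p(N-2) + 2b - N - 2)`,
one has `A < 0`, `C ≥ 0`, and there exists `k ∈ [0,∞)` such that `G > 0` on `(0,k)`
and `G < 0` on `(k,∞)`. -/
theorem stmt17 {N : ℕ} (hN : 3 ≤ N) (b p ω A B C : ℝ)
    (hb1 : 0 < b) (hb2 : b < 1)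
    (hp1 : 1 < p) (hp2 : p < 1 + (4 - 2 * b) / ((N : ℝ) - 2))
    (hA : A = -(p + 3) ^ 2 * (2 * b + (N : ℝ) * (p - 1) + 4))
    (hB : B = ω * (p + 3) ^ 2 * (2 * (N : ℝ) - (2 + b)))
    (hC : C = (b - 2 * (N : ℝ) + 2) * (p * ((N : ℝ) - 2) + b + (N : ℝ) - 4) *
      (p * ((N : ℝ) - 2) + 2 * b - (N : ℝ) - 2)) :
    A < 0 ∧ 0 ≤ C ∧
      ∃ k : ℝ, 0 ≤ k ∧
        (∀ x : ℝ, 0 < x → x < k → 0 < A * x ^ 2 + B * x + C) ∧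
        (∀ x : ℝ, k < x → A * x ^ 2 + B * x + C < 0) := by
  have hN' : (3 : ℝ) ≤ (N : ℝ) := by exact_mod_cast hN
  have hN2 : (0 : ℝ) < (N : ℝ) - 2 := by linarith
  have hA0 : A < 0 := by
    rw [hA]
    have h1 : (0:ℝ) < (p + 3) ^ 2 := by positivity
    have h2 : (0:ℝ) < 2 * b + (N : ℝ) * (p - 1) + 4 := by
      nlinarith [mul_pos (show (0:ℝ) < (N:ℝ) by linarith) (show (0:ℝ) < p - 1 by linarith)]
    nlinarith [mul_pos h1 h2]
  have hdiv : (p - 1) * ((N : ℝ) - 2) < 4 - 2 * b := by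
    have h1 : p - 1 < (4 - 2 * b) / ((N : ℝ) - 2) := by linarith
    calc (p - 1) * ((N : ℝ) - 2) < (4 - 2 * b) / ((N : ℝ) - 2) * ((N : ℝ) - 2) :=
          mul_lt_mul_of_pos_right h1 hN2
      _ = 4 - 2 * b := div_mul_cancel₀ _ (ne_of_gt hN2)
  have hf1 : b - 2 * (N : ℝ) + 2 < 0 := by linarith
  have hf2 : 0 < p * ((N : ℝ) - 2) + b + (N : ℝ) - 4 := by nlinarith
  have hf3 : p * ((N : ℝ) - 2) + 2 * b - (N : ℝ) - 2 < 0 := by nlinarith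
  have hC0 : 0 < C := by
    rw [hC]
    exact mul_pos_of_neg_of_neg (mul_neg_of_neg_of_pos hf1 hf2) hf3
  refine ⟨hA0, le_of_lt hC0, ?_⟩
  have hAC : A * C < 0 := mul_neg_of_neg_of_pos hA0 hC0
  have hD : 0 < B ^ 2 - 4 * A * C := by nlinarith
  set s := Real.sqrt (B ^ 2 - 4 * A * C) with hs
  have hs2 : s ^ 2 = B ^ 2 - 4 * A * C := Real.sq_sqrt hD.le
  have hs0 : 0 < s := Real.sqrt_pos.mpr hD
  have habs : |B| < s := by
    rw [← Real.sqrt_sq_eq_abs]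
    exact Real.sqrt_lt_sqrt (sq_nonneg B) (by nlinarith)
  obtain ⟨hB1, hB2⟩ := abs_lt.mp habs
  have hAne : A ≠ 0 := hA0.ne
  have h2A : 0 < -2 * A := by linarith
  set k := (B + s) / (-2 * A) with hk
  set r1 := (B - s) / (-2 * A) with hr1
  have hk0 : 0 < k := div_pos (by linarith) h2A
  have hr10 : r1 < 0 := div_neg_of_neg_of_pos (by linarith) h2A
  have key : ∀ x : ℝ, A * x ^ 2 + B * x + C = A * (x - r1) * (x - k) := by
    intro x
    rw [hk, hr1]
    field_simp
    linear_combination hs2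
  refine ⟨k, hk0.le, ?_, ?_⟩
  · intro x hx1 hx2
    rw [key x]
    exact mul_pos_of_neg_of_neg (mul_neg_of_neg_of_pos hA0 (by linarith)) (by linarith)
  · intro x hx
    rw [key x]
    exact mul_neg_of_neg_of_pos (mul_neg_of_neg_of_pos hA0 (by linarith)) (by linarith)
end
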